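/- arXiv:math/9710203 — 3 statements merged into one kernel-verified Lean document; each statement's English description precedes it below -/
import Mathlib

section
/- (Pełczyński decomposition method) Let X and Y be Banach spaces such that X is isomorphic to a complemented subspace of Y, Y is isomorphic to a complemented subspace of X, and both X and Y are isomorphic to their Cartesian squares (X ≅ X ⊕ X and Y ≅ Y ⊕ Y). Then X and Y are isomorphic. -/
/-!
Write `Y ≅ X ⊕ F` using the complement of `X` in `Y`. Then
`Y ≅ X ⊕ F ≅ (X ⊕ X) ⊕ F ≅ X ⊕ (X ⊕ F) ≅ X ⊕ Y`, and symmetrically `X ≅ Y ⊕ X`,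
so `X ≅ Y ⊕ X ≅ X ⊕ Y ≅ Y`.
-/

/-- `Z` is isomorphic to a complemented subspace of `W`. -/
def ComplementedIn (Z W : Type*) [NormedAddCommGroup Z] [NormedSpace ℂ Z]
    [NormedAddCommGroup W] [NormedSpace ℂ W] : Prop :=
  ∃ (J : Z →L[ℂ] W) (Q : W →L[ℂ] Z), Q.comp J = ContinuousLinearMap.id ℂ Z

/-- `T` factors through the space `Z`. -/
def FactorsThrough (Z : Type*) [NormedAddCommGroup Z] [NormedSpace ℂ Z]
    {X Y : Type*} [NormedAddCommGroup X] [NormedSpace ℂ X]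
    [NormedAddCommGroup Y] [NormedSpace ℂ Y] (T : X →L[ℂ] Y) : Prop :=
  ∃ (A : X →L[ℂ] Z) (B : Z →L[ℂ] Y), T = B.comp A

namespace ContinuousLinearEquiv

variable {R X Y F : Type*} [Semiring R]
  [AddCommMonoid X] [Module R X] [TopologicalSpace X]
  [AddCommMonoid Y] [Module R Y] [TopologicalSpace Y]
  [AddCommMonoid F] [Module R F] [TopologicalSpace F]

def prodAbsorb (e : Y ≃L[R] X × F) (eX : X ≃L[R] X × X) : Y ≃L[R] X × Y :=
  e.trans <| (eX.prodCongr (.refl R F)).trans <| (prodAssoc R X X F).trans <|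
    (ContinuousLinearEquiv.refl R X).prodCongr e.symm

end ContinuousLinearEquiv

section ComplementedIn

variable {Z W : Type*} [NormedAddCommGroup Z] [NormedSpace ℂ Z]
  [NormedAddCommGroup W] [NormedSpace ℂ W]

theorem ComplementedIn.exists_equiv_prod (h : ComplementedIn Z W) :
    ∃ F : Submodule ℂ W, Nonempty (W ≃L[ℂ] Z × F) := by
  obtain ⟨J, Q, hQJ⟩ := h
  exact ⟨Q.ker, ⟨.equivOfRightInverse Q J fun z => congr($hQJ z)⟩⟩

theorem ComplementedIn.nonempty_equiv_prod_of_equiv_prod_self (h : ComplementedIn Z W)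
    (eZ : Z ≃L[ℂ] Z × Z) : Nonempty (W ≃L[ℂ] Z × W) := by
  obtain ⟨F, ⟨e⟩⟩ := h.exists_equiv_prod
  exact ⟨e.prodAbsorb eZ⟩

end ComplementedIn

theorem pelczynski_decomposition_general (X Y : Type*) [NormedAddCommGroup X]
    [NormedSpace ℂ X] [NormedAddCommGroup Y] [NormedSpace ℂ Y]
    (hXY : ComplementedIn X Y) (hYX : ComplementedIn Y X)
    (hX : Nonempty (X ≃L[ℂ] X × X)) (hY : Nonempty (Y ≃L[ℂ] Y × Y)) :
    Nonempty (X ≃L[ℂ] Y) := by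
  obtain ⟨eX⟩ := hX
  obtain ⟨eY⟩ := hY
  obtain ⟨eYXY⟩ := hXY.nonempty_equiv_prod_of_equiv_prod_self eX
  obtain ⟨eXYX⟩ := hYX.nonempty_equiv_prod_of_equiv_prod_self eY
  exact ⟨eXYX.trans <| (ContinuousLinearEquiv.prodComm ℂ Y X).trans eYXY.symm⟩

/-- Pełczyński's decomposition method. -/
theorem pelczynski_decomposition (X Y : Type*) [NormedAddCommGroup X]
    [NormedSpace ℂ X] [CompleteSpace X] [NormedAddCommGroup Y] [NormedSpace ℂ Y]
    [CompleteSpace Y]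
    (hXY : ComplementedIn X Y) (hYX : ComplementedIn Y X)
    (hX : Nonempty (X ≃L[ℂ] X × X)) (hY : Nonempty (Y ≃L[ℂ] Y × Y)) :
    Nonempty (X ≃L[ℂ] Y) :=
  pelczynski_decomposition_general X Y hXY hYX hX hY
end

section
/- The map (x, y) ↦ ‖(x,y)‖_α := ‖x‖₂ + ‖y − Ω_α(x)‖₂ on the set Z_α of pairs of complex sequences with x ∈ ℓ² and y − Ω_α(x) ∈ ℓ² satisfies: ‖(x,y)‖_α = 0 iff (x,y) = (0,0), and ‖λ(x,y)‖_α = |λ|·‖(x,y)‖_α for all complex λ. -/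
/-- `f_α(t) = t^(1+iα) = t·exp(iα·log t)` for `t ≠ 0`, and `f_α(0) = 0`. -/
noncomputable def falpha (α : ℝ) (t : ℝ) : ℂ :=
  if t = 0 then 0 else (t : ℂ) * Complex.exp (Complex.I * α * Real.log t)

/-- The `ℓ²`-norm of a complex sequence (junk value if not square-summable). -/
noncomputable def norm2 (x : ℕ → ℂ) : ℝ := (∑' k, ‖x k‖ ^ 2) ^ (1 / 2 : ℝ)

/-- Kalton's map `Ω_α` on complex sequences. -/
noncomputable def OmegaSeq (α : ℝ) (x : ℕ → ℂ) : ℕ → ℂ := fun k =>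
  if x k = 0 then 0 else x k * falpha α (Real.log (norm2 x / ‖x k‖))

/-- The quasi-norm of `Z_α`: `‖(x,y)‖_α = ‖x‖₂ + ‖y − Ω_α(x)‖₂`. -/
noncomputable def Znorm (α : ℝ) (p : (ℕ → ℂ) × (ℕ → ℂ)) : ℝ :=
  norm2 p.1 + norm2 (p.2 - OmegaSeq α p.1)

/-- The space `Z_α`: pairs `(x,y)` with `x ∈ ℓ²` and `y − Ω_α(x) ∈ ℓ²`. -/
def ZSet (α : ℝ) : Set ((ℕ → ℂ) × (ℕ → ℂ)) :=
  {p | Memℓp p.1 2 ∧ Memℓp (p.2 - OmegaSeq α p.1) 2}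

lemma tsum_sq_nonneg (x : ℕ → ℂ) : 0 ≤ ∑' k, ‖x k‖ ^ 2 :=
  tsum_nonneg fun _ => sq_nonneg _

lemma norm2_nonneg (x : ℕ → ℂ) : 0 ≤ norm2 x :=
  Real.rpow_nonneg (tsum_sq_nonneg x) _

lemma memℓp_summable (x : ℕ → ℂ) (hx : Memℓp x 2) : Summable fun k => ‖x k‖ ^ (2:ℕ) := by
  have := hx.summable (by norm_num : (0:ℝ) < ENNReal.toReal 2)
  norm_num at this
  exact this

lemma norm2_eq_zero (x : ℕ → ℂ) (hx : Memℓp x 2) : norm2 x = 0 ↔ x = 0 := by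
  constructor
  · intro h
    have hs : ∑' k, ‖x k‖ ^ 2 = 0 := by
      have := (Real.rpow_eq_zero (tsum_sq_nonneg x) (by norm_num)).mp h
      exact this
    have hsum := memℓp_summable x hx
    funext k
    have hk : ‖x k‖ ^ 2 ≤ 0 := hs ▸ Summable.le_tsum hsum k (fun j _ => sq_nonneg _)
    have h2 : ‖x k‖ = 0 := sq_eq_zero_iff.mp (le_antisymm hk (sq_nonneg _))
    simpa using h2
  · rintro rfl
    have h : ∑' (k : ℕ), ‖(0 : ℕ → ℂ) k‖ ^ 2 = 0 := by simp
    rw [norm2, h, Real.zero_rpow (by norm_num)]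

lemma norm2_smul (l : ℂ) (x : ℕ → ℂ) : norm2 (l • x) = ‖l‖ * norm2 x := by
  unfold norm2
  have h1 : (fun k => ‖(l • x) k‖ ^ 2) = fun k => ‖l‖ ^ 2 * ‖x k‖ ^ 2 := by
    funext k; simp [norm_smul, mul_pow]
  rw [h1, tsum_mul_left, Real.mul_rpow (sq_nonneg _) (tsum_sq_nonneg x),
    ← Real.rpow_natCast ‖l‖ 2, ← Real.rpow_mul (norm_nonneg l)]
  norm_num

lemma OmegaSeq_smul (α : ℝ) (l : ℂ) (x : ℕ → ℂ) :
    OmegaSeq α (l • x) = l • OmegaSeq α x := by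
  funext k
  by_cases hl : l = 0
  · simp [OmegaSeq, hl]
  by_cases hxk : x k = 0
  · simp [OmegaSeq, hxk]
  simp only [OmegaSeq, Pi.smul_apply, smul_eq_mul]
  rw [if_neg (mul_ne_zero hl hxk), if_neg hxk, norm2_smul, norm_mul,
    mul_div_mul_left _ _ (norm_ne_zero_iff.mpr hl)]
  ring

/-- `‖·‖_α` vanishes only at `(0,0)` and is absolutely homogeneous. -/
theorem Znorm_eq_zero_iff_and_homogeneous (α : ℝ) (x y : ℕ → ℂ)
    (hx : Memℓp x 2) (hy : Memℓp (y - OmegaSeq α x) 2) :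
    (Znorm α (x, y) = 0 ↔ x = 0 ∧ y = 0) ∧
      ∀ l : ℂ, Znorm α (l • x, l • y) = ‖l‖ * Znorm α (x, y) := by
  have hO0 : OmegaSeq α 0 = 0 := by funext k; simp [OmegaSeq]
  constructor
  · constructor
    · intro h
      have h1 : norm2 x = 0 ∧ norm2 (y - OmegaSeq α x) = 0 := by
        constructor <;>
        · have := norm2_nonneg x; have := norm2_nonneg (y - OmegaSeq α x)
          simp only [Znorm] at h; linarith
      have hx0 : x = 0 := (norm2_eq_zero x hx).mp h1.1
      refine ⟨hx0, ?_⟩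
      have : y - OmegaSeq α x = y := by rw [hx0, hO0]; simp
      have hy0 := (norm2_eq_zero _ hy).mp h1.2
      rw [this] at hy0
      exact hy0
    · rintro ⟨rfl, rfl⟩
      simp [Znorm, hO0, norm2, Real.zero_rpow]
  · intro l
    have : l • y - OmegaSeq α (l • x) = l • (y - OmegaSeq α x) := by
      rw [OmegaSeq_smul]; funext k; simp; ring
    simp only [Znorm, this, norm2_smul]
    ring
end

section
/- Suppose there is a constant C such that ‖(sx, sy)‖_α ≤ C‖s‖_∞‖(x,y)‖_α for every bounded scalar sequence s (acting by coordinatewise multiplication) and every (x,y) ∈ Z_α. Then the odd/even splitting map U(x,y) := ((U^odd x, U^odd y), (U^even x, U^even y)), where (U^odd x)_k = ξ_{2k−1} and (U^even x)_k = ξ_{2k}, is a bijection from Z_α onto Z_α ⊕ Z_α with ‖U(x,y)‖ ≤ 2C‖(x,y)‖_α; hence Z_α is isomorphic to its square. -/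
/-- The odd-entry part of a sequence. -/
def Uodd (x : ℕ → ℂ) : ℕ → ℂ := fun k => x (2 * k)

/-- The even-entry part of a sequence. -/
def Ueven (x : ℕ → ℂ) : ℕ → ℂ := fun k => x (2 * k + 1)

/-- The odd/even splitting map on pairs of sequences. -/
def Umap (p : (ℕ → ℂ) × (ℕ → ℂ)) :
    ((ℕ → ℂ) × (ℕ → ℂ)) × ((ℕ → ℂ) × (ℕ → ℂ)) :=
  ((Uodd p.1, Uodd p.2), (Ueven p.1, Ueven p.2))

open Function Set

lemma falpha_eq (α t : ℝ) : falpha α t = t * Complex.exp (↑(α * Real.log t) * Complex.I) := by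
  unfold falpha
  split_ifs with ht
  · simp [ht]
  · push_cast; ring_nf

lemma falpha_neg (α t : ℝ) : falpha α (-t) = -falpha α t := by
  simp only [falpha_eq, Real.log_neg_eq_log]; push_cast; ring

lemma norm_falpha (α t : ℝ) : ‖falpha α t‖ = |t| := by
  rw [falpha_eq, norm_mul, Complex.norm_exp_ofReal_mul_I, mul_one, Complex.norm_real,
    Real.norm_eq_abs]

lemma mul_abs_log_sub_log_le {a b : ℝ} (hb : 0 ≤ b) (hba : b ≤ a) :
    b * |Real.log a - Real.log b| ≤ a - b := by
  rcases hb.eq_or_lt with rfl | hb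
  · simpa using hba
  have ha := hb.trans_le hba
  rw [abs_of_nonneg (sub_nonneg.2 (Real.log_le_log hb hba)), ← Real.log_div ha.ne' hb.ne']
  calc b * Real.log (a / b) ≤ b * (a / b - 1) :=
        mul_le_mul_of_nonneg_left (Real.log_le_sub_one_of_pos (div_pos ha hb)) hb.le
    _ = a - b := by field_simp

lemma norm_falpha_sub_le_of_nonneg (α : ℝ) {a b : ℝ} (hb : 0 ≤ b) (hba : b ≤ a) :
    ‖falpha α a - falpha α b‖ ≤ (1 + |α|) * (a - b) := by
  have hθ : b * |α * (Real.log a - Real.log b)| ≤ |α| * (a - b) := by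
    rw [abs_mul, mul_left_comm]
    exact mul_le_mul_of_nonneg_left (mul_abs_log_sub_log_le hb hba) (abs_nonneg α)
  have hsplit : falpha α a - falpha α b = ↑(a - b) * Complex.exp (↑(α * Real.log a) * Complex.I)
      + b * Complex.exp (↑(α * Real.log b) * Complex.I)
        * (Complex.exp (Complex.I * ↑(α * (Real.log a - Real.log b))) - 1) := by
    have hexp : Complex.exp (↑(α * Real.log a) * Complex.I) = Complex.exp (↑(α * Real.log b) *
        Complex.I) * Complex.exp (Complex.I * ↑(α * (Real.log a - Real.log b))) := by
      rw [← Complex.exp_add]; push_cast; ring_nf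
    rw [falpha_eq, falpha_eq, hexp]; push_cast; ring
  calc ‖falpha α a - falpha α b‖
      ≤ |a - b| + b * ‖Complex.exp (Complex.I * ↑(α * (Real.log a - Real.log b))) - 1‖ := by
        rw [hsplit]
        refine (norm_add_le _ _).trans_eq ?_
        simp only [norm_mul, Complex.norm_exp_ofReal_mul_I, Complex.norm_real, Real.norm_eq_abs,
          abs_of_nonneg hb, mul_one]
    _ ≤ (a - b) + b * |α * (Real.log a - Real.log b)| := by
        rw [abs_of_nonneg (sub_nonneg.2 hba)]
        gcongr
        exact Real.norm_exp_I_mul_ofReal_sub_one_le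
    _ ≤ (1 + |α|) * (a - b) := by linarith

lemma norm_falpha_sub_le (α a b : ℝ) : ‖falpha α a - falpha α b‖ ≤ (1 + |α|) * |a - b| := by
  wlog hba : b ≤ a generalizing a b
  · rw [norm_sub_rev, abs_sub_comm]
    exact this b a (le_of_not_ge hba)
  rw [abs_of_nonneg (sub_nonneg.2 hba)]
  rcases le_total 0 b with hb | hb
  · exact norm_falpha_sub_le_of_nonneg α hb hba
  rcases le_total a 0 with ha | ha
  · simpa [falpha_neg, ← sub_eq_neg_add, norm_sub_rev] using
      norm_falpha_sub_le_of_nonneg α (neg_nonneg.2 ha) (neg_le_neg hba)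
  · calc ‖falpha α a - falpha α b‖ ≤ ‖falpha α a‖ + ‖falpha α b‖ := norm_sub_le _ _
      _ = a - b := by rw [norm_falpha, norm_falpha, abs_of_nonneg ha, abs_of_nonpos hb]; ring
      _ ≤ (1 + |α|) * (a - b) := le_mul_of_one_le_left (by linarith) (by simp)

noncomputable def omegaAt (α N : ℝ) (x : ℕ → ℂ) : ℕ → ℂ := fun k =>
  if x k = 0 then 0 else x k * falpha α (Real.log (N / ‖x k‖))

lemma omegaSeq_eq_omegaAt (α : ℝ) (x : ℕ → ℂ) : OmegaSeq α x = omegaAt α (norm2 x) x := rfl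

lemma norm_omegaAt_sub_le (α : ℝ) {N N' : ℝ} (hN : 0 < N) (hN' : 0 < N') (x : ℕ → ℂ) (k : ℕ) :
    ‖omegaAt α N x k - omegaAt α N' x k‖ ≤ (1 + |α|) * |Real.log N - Real.log N'| * ‖x k‖ := by
  unfold omegaAt
  split_ifs with hx
  · simp only [sub_self, norm_zero]; positivity
  have hxk : ‖x k‖ ≠ 0 := norm_ne_zero_iff.2 hx
  rw [← mul_sub, norm_mul, mul_comm]
  gcongr
  refine (norm_falpha_sub_le α _ _).trans_eq ?_
  rw [Real.log_div hN.ne' hxk, Real.log_div hN'.ne' hxk, sub_sub_sub_cancel_right]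

lemma memℓp_omegaAt_sub (α : ℝ) {N N' : ℝ} (hN : 0 < N) (hN' : 0 < N') {x : ℕ → ℂ}
    (hx : Memℓp x 2) : Memℓp (omegaAt α N x - omegaAt α N' x) 2 :=
  (hx.norm.const_mul ((1 + |α|) * |Real.log N - Real.log N'|)).mono
    (norm_omegaAt_sub_le α hN hN' x)

lemma omegaAt_zero (α N : ℝ) : omegaAt α N 0 = 0 := by
  funext k; simp [omegaAt]

lemma omegaAt_indicator (α N : ℝ) (S : Set ℕ) (x : ℕ → ℂ) :
    omegaAt α N (S.indicator x) = S.indicator (omegaAt α N x) := by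
  funext k
  by_cases hk : k ∈ S <;> simp [omegaAt, hk]

lemma memℓp_two_iff_summable {ι E : Type*} [NormedAddCommGroup E] {x : ι → E} :
    Memℓp x 2 ↔ Summable fun k => ‖x k‖ ^ 2 := by
  simp [memℓp_gen_iff]

lemma norm2_pos {x : ℕ → ℂ} (hx : Memℓp x 2) (hx0 : x ≠ 0) : 0 < norm2 x := by
  obtain ⟨k, hk⟩ := Function.ne_iff.1 hx0
  exact Real.rpow_pos_of_pos ((memℓp_two_iff_summable.1 hx).tsum_pos (fun _ => by positivity) k
    (pow_pos (norm_pos_iff.2 hk) 2)) _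

lemma memℓp_indicator {ι E : Type*} [NormedAddCommGroup E] {p : ENNReal} {x : ι → E}
    (hx : Memℓp x p) (S : Set ι) : Memℓp (S.indicator x) p :=
  hx.mono' fun _ => norm_indicator_le_norm_self _ _

lemma memℓp_omegaSeq_indicator_sub (α : ℝ) {x : ℕ → ℂ} (hx : Memℓp x 2) (S : Set ℕ) :
    Memℓp (OmegaSeq α (S.indicator x) - S.indicator (OmegaSeq α x)) 2 := by
  simp only [omegaSeq_eq_omegaAt, ← omegaAt_indicator]
  by_cases h0 : S.indicator x = 0
  · simpa [h0, omegaAt_zero] using zero_memℓp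
  have hx0 : x ≠ 0 := by rintro rfl; simp at h0
  rw [omegaAt_indicator, omegaAt_indicator, ← Set.indicator_sub']
  exact memℓp_indicator (memℓp_omegaAt_sub α (norm2_pos (memℓp_indicator hx S) h0)
    (norm2_pos hx hx0) hx) S

lemma indicator_mem_ZSet {α : ℝ} {x y : ℕ → ℂ} (hp : (x, y) ∈ ZSet α) (S : Set ℕ) :
    (S.indicator x, S.indicator y) ∈ ZSet α := by
  obtain ⟨hx, hy⟩ := hp
  have hdecomp : S.indicator y - OmegaSeq α (S.indicator x) = S.indicator (y - OmegaSeq α x)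
      - (OmegaSeq α (S.indicator x) - S.indicator (OmegaSeq α x)) := by
    rw [Set.indicator_sub']; abel
  refine ⟨memℓp_indicator hx S, ?_⟩
  rw [hdecomp]
  exact (memℓp_indicator hy S).sub (memℓp_omegaSeq_indicator_sub α hx S)

lemma mem_ZSet_of_indicator_mem_ZSet {α : ℝ} {x y : ℕ → ℂ} (S : Set ℕ)
    (hS : (S.indicator x, S.indicator y) ∈ ZSet α)
    (hSc : (Sᶜ.indicator x, Sᶜ.indicator y) ∈ ZSet α) : (x, y) ∈ ZSet α := by
  have hx : Memℓp x 2 := S.indicator_self_add_compl x ▸ hS.1.add hSc.1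
  have hdecomp : y - OmegaSeq α x = (S.indicator y - OmegaSeq α (S.indicator x))
      + (Sᶜ.indicator y - OmegaSeq α (Sᶜ.indicator x))
      + (OmegaSeq α (S.indicator x) - S.indicator (OmegaSeq α x))
      + (OmegaSeq α (Sᶜ.indicator x) - Sᶜ.indicator (OmegaSeq α x)) := by
    nth_rw 1 [← S.indicator_self_add_compl y, ← S.indicator_self_add_compl (OmegaSeq α x)]
    abel
  refine ⟨hx, ?_⟩
  rw [hdecomp]
  exact ((hS.2.add hSc.2).add (memℓp_omegaSeq_indicator_sub α hx S)).add
    (memℓp_omegaSeq_indicator_sub α hx Sᶜ)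

lemma support_omegaSeq_subset (α : ℝ) (x : ℕ → ℂ) : support (OmegaSeq α x) ⊆ support x :=
  fun k hk => by_contra fun hx => hk (by simp [OmegaSeq, notMem_support.1 hx])

section Reindexing

variable {e : ℕ → ℕ}

lemma norm2_comp (he : Injective e) {w : ℕ → ℂ} (hw : support w ⊆ range e) :
    norm2 (w ∘ e) = norm2 w := by
  unfold norm2
  congr 1
  exact he.tsum_eq (f := fun n => ‖w n‖ ^ 2) fun n hn => hw (by simpa using hn)

lemma memℓp_comp_iff (he : Injective e) {w : ℕ → ℂ} (hw : support w ⊆ range e) :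
    Memℓp (w ∘ e) 2 ↔ Memℓp w 2 := by
  simp only [memℓp_two_iff_summable]
  exact he.summable_iff (f := fun n => ‖w n‖ ^ 2) fun n hn => by
    simpa using notMem_support.1 (mt (@hw n) hn)

lemma omegaSeq_comp (α : ℝ) (he : Injective e) {x : ℕ → ℂ} (hx : support x ⊆ range e) :
    OmegaSeq α (x ∘ e) = OmegaSeq α x ∘ e := by
  funext k
  simp only [OmegaSeq, comp_apply, norm2_comp he hx]

lemma sub_omegaSeq_comp (α : ℝ) (he : Injective e) {x y : ℕ → ℂ} (hx : support x ⊆ range e) :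
    y ∘ e - OmegaSeq α (x ∘ e) = (y - OmegaSeq α x) ∘ e := by
  rw [omegaSeq_comp α he hx]; rfl

lemma support_sub_omegaSeq_subset (α : ℝ) {x y : ℕ → ℂ} (hx : support x ⊆ range e)
    (hy : support y ⊆ range e) : support (y - OmegaSeq α x) ⊆ range e :=
  (support_sub _ _).trans (union_subset hy ((support_omegaSeq_subset α x).trans hx))

lemma comp_mem_ZSet_iff {α : ℝ} (he : Injective e) {x y : ℕ → ℂ} (hx : support x ⊆ range e)
    (hy : support y ⊆ range e) : (x ∘ e, y ∘ e) ∈ ZSet α ↔ (x, y) ∈ ZSet α := by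
  simp only [ZSet, mem_ofPred_eq, sub_omegaSeq_comp α he hx, memℓp_comp_iff he hx,
    memℓp_comp_iff he (support_sub_omegaSeq_subset α hx hy)]

lemma Znorm_comp (α : ℝ) (he : Injective e) {x y : ℕ → ℂ} (hx : support x ⊆ range e)
    (hy : support y ⊆ range e) : Znorm α (x ∘ e, y ∘ e) = Znorm α (x, y) := by
  simp only [Znorm, sub_omegaSeq_comp α he hx, norm2_comp he hx,
    norm2_comp he (support_sub_omegaSeq_subset α hx hy)]

lemma indicator_range_comp (x : ℕ → ℂ) : (range e).indicator x ∘ e = x ∘ e :=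
  funext fun k => indicator_of_mem (mem_range_self k) x

lemma comp_mem_ZSet_iff_indicator {α : ℝ} (he : Injective e) {x y : ℕ → ℂ} :
    (x ∘ e, y ∘ e) ∈ ZSet α ↔ ((range e).indicator x, (range e).indicator y) ∈ ZSet α := by
  rw [← indicator_range_comp x, ← indicator_range_comp y]
  exact comp_mem_ZSet_iff he support_indicator_subset support_indicator_subset

lemma Znorm_comp_eq_indicator (α : ℝ) (he : Injective e) (x y : ℕ → ℂ) :
    Znorm α (x ∘ e, y ∘ e) = Znorm α ((range e).indicator x, (range e).indicator y) := by
  rw [← indicator_range_comp x, ← indicator_range_comp y]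
  exact Znorm_comp α he support_indicator_subset support_indicator_subset

lemma comp_mem_ZSet {α : ℝ} (he : Injective e) {x y : ℕ → ℂ} (hp : (x, y) ∈ ZSet α) :
    (x ∘ e, y ∘ e) ∈ ZSet α :=
  (comp_mem_ZSet_iff_indicator he).2 (indicator_mem_ZSet hp _)

lemma mem_ZSet_of_comp_mem_ZSet {α : ℝ} {e' : ℕ → ℕ} (he : Injective e) (he' : Injective e')
    (hcompl : range e' = (range e)ᶜ) {x y : ℕ → ℂ} (h : (x ∘ e, y ∘ e) ∈ ZSet α)
    (h' : (x ∘ e', y ∘ e') ∈ ZSet α) : (x, y) ∈ ZSet α :=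
  mem_ZSet_of_indicator_mem_ZSet (range e) ((comp_mem_ZSet_iff_indicator he).1 h)
    (hcompl ▸ (comp_mem_ZSet_iff_indicator he').1 h')

end Reindexing

def BoundedMultipliers (α C : ℝ) : Prop :=
  ∀ (s : ℕ → ℂ) (M : ℝ), (∀ k, ‖s k‖ ≤ M) → ∀ p ∈ ZSet α,
    Znorm α (fun k => s k * p.1 k, fun k => s k * p.2 k) ≤ C * M * Znorm α p

lemma BoundedMultipliers.Znorm_indicator_le {α C : ℝ} (hC : BoundedMultipliers α C)
    (S : Set ℕ) {x y : ℕ → ℂ} (hp : (x, y) ∈ ZSet α) :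
    Znorm α (S.indicator x, S.indicator y) ≤ C * Znorm α (x, y) := by
  have hmul (z : ℕ → ℂ) : (fun k => S.indicator 1 k * z k) = S.indicator z := by
    funext k; by_cases hk : k ∈ S <;> simp [hk]
  simpa [hmul] using hC (S.indicator 1) 1 (fun k => (norm_indicator_le_norm_self _ _).trans
    (by simp)) (x, y) hp

lemma BoundedMultipliers.Znorm_comp_le {α C : ℝ} (hC : BoundedMultipliers α C) {e : ℕ → ℕ}
    (he : Injective e) {x y : ℕ → ℂ} (hp : (x, y) ∈ ZSet α) :
    Znorm α (x ∘ e, y ∘ e) ≤ C * Znorm α (x, y) :=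
  (Znorm_comp_eq_indicator α he x y).trans_le (hC.Znorm_indicator_le _ hp)

def interleave {β : Type*} (u v : ℕ → β) : ℕ → β :=
  fun n => if Even n then u (n / 2) else v (n / 2)

lemma interleave_comp_two_mul {β : Type*} (u v : ℕ → β) : interleave u v ∘ (2 * ·) = u := by
  funext k; simp [interleave]

lemma interleave_comp_two_mul_add_one {β : Type*} (u v : ℕ → β) :
    interleave u v ∘ (2 * · + 1) = v := by
  funext k; simp only [interleave, comp_apply, Nat.not_even_two_mul_add_one, if_false]
  congr 1; omega

lemma eq_of_comp_two_mul_eq {β : Type*} {x x' : ℕ → β} (h₀ : x ∘ (2 * ·) = x' ∘ (2 * ·))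
    (h₁ : x ∘ (2 * · + 1) = x' ∘ (2 * · + 1)) : x = x' := by
  funext n
  obtain ⟨k, rfl | rfl⟩ := Nat.even_or_odd' n
  exacts [congrFun h₀ k, congrFun h₁ k]

lemma range_two_mul_add_one_eq_compl : range (2 * · + 1 : ℕ → ℕ) = (range (2 * ·))ᶜ := by
  ext n; simp

/-- Assuming multiplication by bounded sequences is bounded on `Z_α` with
constant `C`, the odd/even splitting map is a bijection from `Z_α` onto
`Z_α ⊕ Z_α` satisfying `‖U(x,y)‖ ≤ 2C‖(x,y)‖_α`; hence `Z_α` is isomorphic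
to its square. -/
theorem Umap_bijOn_and_bound (α C : ℝ)
    (hC : ∀ (s : ℕ → ℂ) (M : ℝ), (∀ k, ‖s k‖ ≤ M) → ∀ p ∈ ZSet α,
      Znorm α (fun k => s k * p.1 k, fun k => s k * p.2 k) ≤ C * M * Znorm α p) :
    Set.BijOn Umap (ZSet α) (ZSet α ×ˢ ZSet α) ∧
      ∀ p ∈ ZSet α, Znorm α (Umap p).1 + Znorm α (Umap p).2 ≤ 2 * C * Znorm α p := by
  have he₀ : Injective (2 * · : ℕ → ℕ) := fun a b h => by simpa using h
  have he₁ : Injective (2 * · + 1 : ℕ → ℕ) := fun a b h => by simpa using h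
  -- `Uodd x` and `Ueven x` are definitionally `x ∘ (2 * ·)` and `x ∘ (2 * · + 1)`.
  refine ⟨⟨fun p hp => ⟨comp_mem_ZSet he₀ hp, comp_mem_ZSet he₁ hp⟩, fun p _ q _ h => ?_,
    fun q hq => ?_⟩, fun p hp => ?_⟩
  · simp only [Umap, Prod.mk.injEq] at h
    exact Prod.ext (eq_of_comp_two_mul_eq h.1.1 h.2.1) (eq_of_comp_two_mul_eq h.1.2 h.2.2)
  · refine ⟨(interleave q.1.1 q.2.1, interleave q.1.2 q.2.2), ?_, ?_⟩
    · refine mem_ZSet_of_comp_mem_ZSet he₀ he₁ range_two_mul_add_one_eq_compl ?_ ?_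
      · simpa only [interleave_comp_two_mul] using hq.1
      · simpa only [interleave_comp_two_mul_add_one] using hq.2
    · exact Prod.ext (Prod.ext (interleave_comp_two_mul _ _) (interleave_comp_two_mul _ _))
        (Prod.ext (interleave_comp_two_mul_add_one _ _) (interleave_comp_two_mul_add_one _ _))
  · calc Znorm α (Umap p).1 + Znorm α (Umap p).2 ≤ C * Znorm α p + C * Znorm α p :=
          add_le_add (BoundedMultipliers.Znorm_comp_le hC he₀ hp)
            (BoundedMultipliers.Znorm_comp_le hC he₁ hp)
      _ = 2 * C * Znorm α p := by ring
end
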